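/- Let F be a free group on x_1,…,x_m and φ, ψ : F → G group homomorphisms such that ψ(x_i) = g_i φ(x_i) g_i⁻¹ for some g_i ∈ G. Then φ and ψ induce the same homomorphism F_{n+1}/F_{n+2} → G_{n+1}/G_{n+2} for every n ≥ 0, where subscripts denote lower central series. -/

import Mathlib

/-!
Write `γ n` for Mathlib's `(⊤ : Subgroup G).lowerCentralSeries n`, the paper's `G_{n+1}`.
On generators `ψ` and `φ` differ by a conjugation, so `ψ x ≡ φ x` modulo `γ 1 = [G, G]` for every
`x`. The induction step then rests on the commutator pairing `γ n / γ (n+1) × G / γ 1 → γ (n+1) /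
γ (n+2)` being well defined: changing the first entry by an element of `γ (n+1)` or the second by
an element of `γ 1` does not change `⁅u, v⁆` modulo `γ (n+2)`. The second case uses
`⁅γ n, γ 1⁆ ≤ γ (n+2)`, which comes from the three subgroups lemma.
-/

open Subgroup
open scoped commutatorElement

section

variable {G : Type*} [Group G]

local notation "γ" n => Subgroup.lowerCentralSeries (⊤ : Subgroup G) n

theorem commutatorElement_mul_left_of_commute {a u w : G} (haw : Commute a w)
    (hau : Commute a ⁅u, w⁆) : ⁅a * u, w⁆ = ⁅u, w⁆ := by
  rw [commutatorElement_mul_left_eq_conj_mul, hau.eq, mul_inv_cancel_right,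
    commutatorElement_eq_one_iff_commute.mpr haw, mul_one]

theorem commutatorElement_mul_right_of_commute {u b v : G} (hub : Commute u b)
    (hbv : Commute b ⁅u, v⁆) : ⁅u, b * v⁆ = ⁅u, v⁆ := by
  rw [commutatorElement_mul_right_eq_mul_conj, commutatorElement_eq_one_iff_commute.mpr hub,
    one_mul, hbv.eq, mul_inv_cancel_right]

theorem QuotientGroup.mk_commutatorElement (N : Subgroup G) [N.Normal] (x y : G) :
    ((⁅x, y⁆ : G) : G ⧸ N) = ⁅(x : G ⧸ N), (y : G ⧸ N)⁆ :=
  map_commutatorElement (mk' N) x y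

theorem QuotientGroup.commute_mk_of_commutatorElement_mem {N : Subgroup G} [N.Normal] {x y : G}
    (h : ⁅x, y⁆ ∈ N) : Commute (x : G ⧸ N) y := by
  rw [← commutatorElement_eq_one_iff_commute, ← mk_commutatorElement, eq_one_iff]
  exact h

theorem Subgroup.commutator_commutator_le_of_rotate {H₁ H₂ H₃ N : Subgroup G} [N.Normal]
    (h1 : ⁅⁅H₂, H₃⁆, H₁⁆ ≤ N) (h2 : ⁅⁅H₃, H₁⁆, H₂⁆ ≤ N) : ⁅⁅H₁, H₂⁆, H₃⁆ ≤ N := by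
  have le_iff_map_eq_bot : ∀ K₁ K₂ K₃ : Subgroup G, ⁅⁅K₁, K₂⁆, K₃⁆ ≤ N ↔
      ⁅⁅K₁.map (QuotientGroup.mk' N), K₂.map (QuotientGroup.mk' N)⁆,
        K₃.map (QuotientGroup.mk' N)⁆ = ⊥ := fun K₁ K₂ K₃ => by
    rw [← map_commutator, ← map_commutator, map_eq_bot_iff, QuotientGroup.ker_mk']
  rw [le_iff_map_eq_bot] at h1 h2 ⊢
  exact commutator_commutator_eq_bot_of_rotate h1 h2

theorem Subgroup.commutator_lowerCentralSeries_le (n m : ℕ) : ⁅γ n, γ m⁆ ≤ γ (n + m + 1) := by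
  induction m generalizing n with
  | zero => exact le_rfl
  | succ m ih =>
    rw [lowerCentralSeries_succ, commutator_comm]
    apply commutator_commutator_le_of_rotate
    · rw [commutator_comm ⊤, ← lowerCentralSeries_succ]
      exact (ih (n + 1)).trans_eq (congrArg _ (by omega))
    · exact commutator_mono (ih n) le_top

theorem QuotientGroup.mk_mem_center_of_mem_lowerCentralSeries {n : ℕ} {a : G} (ha : a ∈ γ n) :
    (a : G ⧸ γ (n + 1)) ∈ center _ := by
  refine mem_center_iff.mpr fun y => ?_
  induction y using QuotientGroup.induction_on with
  | H y => exact (commute_mk_of_commutatorElement_mem (commutator_mem_commutator ha (mem_top y))).symm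

theorem QuotientGroup.mk_commutatorElement_mul_mul {n : ℕ} {u a b : G} (v : G)
    (hu : u ∈ γ n) (ha : a ∈ γ (n + 1)) (hb : b ∈ γ 1) :
    ((⁅a * u, b * v⁆ : G) : G ⧸ γ (n + 2)) = ((⁅u, v⁆ : G) : G ⧸ γ (n + 2)) := by
  have ha_central := mk_mem_center_of_mem_lowerCentralSeries ha
  have huv_central := mk_mem_center_of_mem_lowerCentralSeries (n := n + 1)
    (commutator_mem_commutator hu (mem_top v))
  have hub : Commute (u : G ⧸ γ (n + 2)) b :=
    commute_mk_of_commutatorElement_mem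
      (commutator_lowerCentralSeries_le n 1 (commutator_mem_commutator hu hb))
  rw [mk_commutatorElement] at huv_central
  rw [mk_commutatorElement, mk_commutatorElement, mk_mul, mk_mul,
    commutatorElement_mul_left_of_commute (ha_central.comm _) (ha_central.comm _),
    commutatorElement_mul_right_of_commute hub (huv_central.comm _).symm]

theorem mul_inv_mem_lowerCentralSeries_succ_of_mul_inv_mem_commutator {F : Type*} [Group F]
    {φ ψ : F →* G} (h : ∀ x, ψ x * (φ x)⁻¹ ∈ commutator G) (n : ℕ) {x : F}
    (hx : x ∈ (⊤ : Subgroup F).lowerCentralSeries n) : ψ x * (φ x)⁻¹ ∈ γ (n + 1) := by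
  induction n generalizing x with
  | zero => exact h x
  | succ n ih =>
    let π := QuotientGroup.mk' (γ (n + 2))
    suffices (⊤ : Subgroup F).lowerCentralSeries (n + 1) ≤ (π.comp ψ).eqLocus (π.comp φ) by
      rw [← div_eq_mul_inv, ← QuotientGroup.eq_iff_div_mem]
      exact this hx
    refine commutator_le.mpr fun p hp q _ => ?_
    have hφp : φ p ∈ γ n :=
      lowerCentralSeries_mono n le_top (map_lowerCentralSeries ⊤ φ n ▸ mem_map_of_mem φ hp)
    calc π (ψ ⁅p, q⁆) = π ⁅ψ p * (φ p)⁻¹ * φ p, ψ q * (φ q)⁻¹ * φ q⁆ := by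
          simp only [map_commutatorElement, inv_mul_cancel_right]
      _ = π (φ ⁅p, q⁆) := by
          rw [map_commutatorElement φ]
          exact QuotientGroup.mk_commutatorElement_mul_mul _ hφp (ih hp) (h q)

theorem FreeGroup.mul_inv_mem_commutator_of_isConj {α : Type*} {φ ψ : FreeGroup α →* G}
    (h : ∀ i, IsConj (φ (of i)) (ψ (of i))) (x : FreeGroup α) :
    ψ x * (φ x)⁻¹ ∈ commutator G := by
  have hab : Abelianization.of.comp ψ = Abelianization.of.comp φ :=
    ext_hom _ _ fun i => (isConj_iff_eq.mp (Abelianization.of.map_isConj (h i))).symm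
  rw [← Abelianization.ker_of, MonoidHom.mem_ker, _root_.map_mul, _root_.map_inv,
    ← MonoidHom.comp_apply, hab, MonoidHom.comp_apply, mul_inv_cancel]

end

/-- Let `F` be the free group on `x_1, …, x_m` and `φ, ψ : F → G` homomorphisms with
`ψ(x_i) = g_i φ(x_i) g_i⁻¹`.  Then `φ` and `ψ` induce the same homomorphism
`F_{n+1}/F_{n+2} → G_{n+1}/G_{n+2}` for every `n ≥ 0`: for `x ∈ F_{n+1}` (that is,
`x ∈ lowerCentralSeries F n`), `ψ x` and `φ x` agree modulo
`G_{n+2} = lowerCentralSeries G (n+1)`. -/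
theorem conjugate_meridian_maps_induce_same_hom {m : ℕ} {G : Type*} [Group G]
    (φ ψ : FreeGroup (Fin m) →* G) (g : Fin m → G)
    (h : ∀ i : Fin m, ψ (FreeGroup.of i) = g i * φ (FreeGroup.of i) * (g i)⁻¹)
    (n : ℕ) (x : FreeGroup (Fin m)) (hx : x ∈ (⊤ : Subgroup (FreeGroup (Fin m))).lowerCentralSeries n) :
    ψ x * (φ x)⁻¹ ∈ (⊤ : Subgroup G).lowerCentralSeries (n + 1) :=
  mul_inv_mem_lowerCentralSeries_succ_of_mul_inv_mem_commutator
    (FreeGroup.mul_inv_mem_commutator_of_isConj fun i => isConj_iff.mpr ⟨g i, (h i).symm⟩) n hx
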